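/- arXiv:1107.3715 — 5 statements merged into one kernel-verified Lean document; each statement's English description precedes it below -/
import Mathlib

section
/- Let q be a dual codeword of a binary linear code C ⊆ {0,1}^n with support supp(q), and let F ⊆ supp(q) have odd cardinality. Then the cocircuit (forbidden set) inequality Σ_{j∈F} x_j − Σ_{j∈supp(q)\F} x_j ≤ |F| − 1 is valid for conv(C), i.e., every codeword x ∈ C (viewed in R^n) satisfies it. -/
/-- The cocircuit (forbidden set) inequality derived from a dual codeword `q`
and an odd-cardinality subset `F` of its support is valid for every codeword of `C`
(viewed in `ℝⁿ`). -/
theorem cocircuit_inequality_valid (n : ℕ)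
    (C : Submodule (ZMod 2) (Fin n → ZMod 2)) (q : Fin n → ZMod 2)
    (hq : ∀ x ∈ C, ∑ j ∈ Finset.univ.filter (fun j => q j = 1), x j = 0)
    (F : Finset (Fin n)) (hF : F ⊆ Finset.univ.filter (fun j => q j = 1))
    (hodd : Odd F.card) (x : Fin n → ZMod 2) (hx : x ∈ C) :
    ∑ j ∈ F, ((x j).val : ℝ) -
      ∑ j ∈ (Finset.univ.filter (fun j => q j = 1)) \ F, ((x j).val : ℝ) ≤
      (F.card : ℝ) - 1 := by
  set S := Finset.univ.filter (fun j => q j = 1) with hS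
  have hsum := hq x hx
  have hval : ∀ j, (x j).val ≤ 1 := fun j => Nat.lt_succ_iff.mp (ZMod.val_lt (x j))
  have hpar : 2 ∣ ∑ j ∈ S, (x j).val := by
    have h0 : ((∑ j ∈ S, (x j).val : ℕ) : ZMod 2) = 0 := by
      push_cast
      simpa [ZMod.natCast_val, ZMod.cast_id] using hsum
    exact (ZMod.natCast_eq_zero_iff _ 2).mp h0
  have hsplit : ∑ j ∈ S \ F, (x j).val + ∑ j ∈ F, (x j).val = ∑ j ∈ S, (x j).val :=
    Finset.sum_sdiff hF
  have ha : ∑ j ∈ F, (x j).val ≤ F.card := by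
    calc ∑ j ∈ F, (x j).val ≤ ∑ _j ∈ F, 1 := Finset.sum_le_sum fun j _ => hval j
    _ = F.card := by simp
  have key : ∑ j ∈ F, (x j).val + 1 ≤ F.card + ∑ j ∈ S \ F, (x j).val := by
    obtain ⟨k, hk⟩ := hodd
    obtain ⟨m, hm⟩ := hpar
    omega
  have keyR : (∑ j ∈ F, (x j).val : ℝ) + 1 ≤ (F.card : ℝ) + (∑ j ∈ S \ F, (x j).val : ℝ) := by
    exact_mod_cast key
  push_cast at keyR
  linarith
end

section
/- Let C_i = {x ∈ {0,1}^n : Σ_{j∈N} x_j ≡ 0 (mod 2)} be a single parity-check code with support N ⊆ {1,...,n}. Then conv(C_i) = {x ∈ [0,1]^n : Σ_{j∈S} x_j − Σ_{j∈N\S} x_j ≤ |S| − 1 for all S ⊆ N with |S| odd}. -/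
/-!
By Krein–Milman it suffices to show that every extreme point of the polytope `P` is a codeword;
an integral point of `P` is one, since otherwise the FS inequality of its support in `N` fails.
For `S ⊆ N`, the FS inequality of `S` says that `x` restricted to `N` has `ℓ¹`-distance at least
`1` from the indicator of `S`. Hence if `x j` is fractional for some `j ∈ N` and `S` is tight,
the distance `1` cannot be made up by `x j` alone, so there is a second fractional coordinate
`k ∈ N`; and two tight sets `S, S₀` either coincide or both contain `j, k` in `S ∆ S₀`, because
summing their two distance identities gives `2 ≥ #(S ∆ S₀) + (positive contribution of j)` with
`#(S ∆ S₀)` even. So moving `x j` and `x k` by `±t` with the signs read off one tight set keeps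
every tight inequality tight, and `x` is the midpoint of a segment in `P`.
-/

open Finset Filter Topology
open scoped symmDiff

theorem convexHull_eq_of_extremePoints_subset {E : Type*} [AddCommGroup E] [Module ℝ E]
    [TopologicalSpace E] [T2Space E] [IsTopologicalAddGroup E] [ContinuousSMul ℝ E]
    [LocallyConvexSpace ℝ E] {A B : Set E} (hA : IsCompact A) (hAconv : Convex ℝ A)
    (hB : B.Finite) (hBA : B ⊆ A) (hext : A.extremePoints ℝ ⊆ B) :
    convexHull ℝ B = A := by
  refine (convexHull_min hBA hAconv).antisymm ?_
  calc A = closure (convexHull ℝ (A.extremePoints ℝ)) :=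
        (closure_convexHull_extremePoints hA hAconv).symm
    _ ⊆ closure (convexHull ℝ B) := closure_mono (convexHull_mono hext)
    _ = convexHull ℝ B := (hB.isClosed_convexHull ℝ).closure_eq

theorem notMem_extremePoints_of_eventually_add_smul_mem {E : Type*} [AddCommGroup E]
    [Module ℝ E] {A : Set E} {x d : E} (hd : d ≠ 0)
    (h : ∀ᶠ t in 𝓝 (0 : ℝ), x + t • d ∈ A) : x ∉ A.extremePoints ℝ := by
  intro hx
  obtain ⟨ε, hε, hball⟩ := Metric.eventually_nhds_iff.1 h
  have hpos : x + (ε / 2) • d ∈ A :=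
    hball (by rw [Real.dist_0_eq_abs, abs_lt]; constructor <;> linarith)
  have hneg : x + (-(ε / 2)) • d ∈ A :=
    hball (by rw [Real.dist_0_eq_abs, abs_lt]; constructor <;> linarith)
  have hmid : x ∈ openSegment ℝ (x + (ε / 2) • d) (x + (-(ε / 2)) • d) :=
    ⟨1 / 2, 1 / 2, by norm_num, by norm_num, by norm_num, by module⟩
  have := hx.2 hpos hneg hmid
  simp [hε.ne', hd] at this

theorem sum_eq_card_filter_of_forall_eq_zero_or_one {ι : Type*} {f : ι → ℝ} {T : Finset ι}
    (hf : ∀ l ∈ T, f l = 0 ∨ f l = 1) : ∑ l ∈ T, f l = #{l ∈ T | f l = 1} := by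
  rw [← sum_boole]
  refine sum_congr rfl fun l hl => ?_
  rcases hf l hl with h | h <;> simp [h]

theorem even_card_symmDiff {ι : Type*} [DecidableEq ι] {S₁ S₂ : Finset ι}
    (h₁ : Odd #S₁) (h₂ : Odd #S₂) : Even #(S₁ ∆ S₂) := by
  rw [Finset.symmDiff_def, card_union_of_disjoint disjoint_sdiff_sdiff]
  have h₁₂ := card_sdiff_add_card_inter S₁ S₂
  have h₂₁ := card_sdiff_add_card_inter S₂ S₁
  rw [inter_comm] at h₂₁
  rw [Nat.odd_iff] at h₁ h₂
  rw [Nat.even_iff]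
  omega

theorem eq_zero_or_eq_one_of_notMem_Ioo {a : ℝ} (h : 0 ≤ a ∧ a ≤ 1) (ha : a ∉ Set.Ioo 0 1) :
    a = 0 ∨ a = 1 :=
  (Set.Icc_sdiff_Ioo_same zero_le_one).subset ⟨h, ha⟩

namespace SingleParityCheck

variable {ι : Type*}

def code (N : Finset ι) : Set (ι → ℝ) :=
  {x | (∀ j, x j = 0 ∨ x j = 1) ∧ ∃ k : ℕ, ∑ j ∈ N, x j = 2 * k}

theorem finite_code [Finite ι] (N : Finset ι) : (code N).Finite := by
  refine (Set.Finite.pi' fun _ => (Set.finite_singleton (1 : ℝ)).insert 0).subset ?_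
  rintro x ⟨hx, -⟩ j
  simpa using hx j

variable [DecidableEq ι]

def fsForm (N S : Finset ι) : (ι → ℝ) →ₗ[ℝ] ℝ where
  toFun x := ∑ j ∈ S, x j - ∑ j ∈ N \ S, x j
  map_add' x y := by simp only [Pi.add_apply, sum_add_distrib]; ring
  map_smul' c x := by simp only [Pi.smul_apply, smul_eq_mul, ← mul_sum, RingHom.id_apply]; ring

@[simp] theorem fsForm_apply (N S : Finset ι) (x : ι → ℝ) :
    fsForm N S x = ∑ j ∈ S, x j - ∑ j ∈ N \ S, x j := rfl

theorem continuous_fsForm (N S : Finset ι) : Continuous (fsForm N S) := by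
  simp only [fsForm, LinearMap.coe_mk, AddHom.coe_mk]
  fun_prop

def polytope (N : Finset ι) : Set (ι → ℝ) :=
  {x | (∀ j, 0 ≤ x j ∧ x j ≤ 1) ∧ ∀ S ⊆ N, Odd #S → fsForm N S x ≤ #S - 1}

theorem polytope_eq (N : Finset ι) :
    polytope N =
      Set.Icc 0 1 ∩ ⋂ S ∈ {S | S ⊆ N ∧ Odd #S}, {x | fsForm N S x ≤ #S - 1} := by
  ext x
  simp [polytope, Pi.le_def, forall_and]

theorem convex_polytope (N : Finset ι) : Convex ℝ (polytope N) := by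
  rw [polytope_eq]
  exact (convex_Icc 0 1).inter
    (convex_iInter₂ fun S _ => convex_halfSpace_le (fsForm N S).isLinear _)

theorem isCompact_polytope (N : Finset ι) : IsCompact (polytope N) := by
  rw [polytope_eq]
  exact isCompact_Icc.inter_right
    (isClosed_biInter fun S _ => isClosed_le (continuous_fsForm N S) continuous_const)

theorem mem_code_iff_mem_polytope {N : Finset ι} {x : ι → ℝ}
    (hx : ∀ j, x j = 0 ∨ x j = 1) : x ∈ code N ↔ x ∈ polytope N := by
  have hsum (T : Finset ι) : ∑ j ∈ T, x j = #{j ∈ T | x j = 1} :=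
    sum_eq_card_filter_of_forall_eq_zero_or_one fun j _ => hx j
  have hbox (j : ι) : 0 ≤ x j ∧ x j ≤ 1 := by rcases hx j with h | h <;> simp [h]
  constructor
  · rintro ⟨-, k, hk⟩
    refine ⟨hbox, fun S hS ⟨t, ht⟩ => ?_⟩
    have hsplit : #{j ∈ S | x j = 1} + #{j ∈ N \ S | x j = 1} = 2 * k := by
      rw [← sum_sdiff hS, hsum, hsum, add_comm] at hk
      exact_mod_cast hk
    have hle : #{j ∈ S | x j = 1} ≤ #S := card_filter_le _ _
    have : #{j ∈ S | x j = 1} + 1 ≤ #S + #{j ∈ N \ S | x j = 1} := by omega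
    rw [fsForm_apply, hsum, hsum]
    have := (Nat.cast_le (α := ℝ)).2 this
    push_cast at this
    linarith
  · rintro ⟨-, hfs⟩
    refine ⟨hx, ?_⟩
    have hodd : ¬ Odd #{j ∈ N | x j = 1} := fun hodd => by
      have := hfs _ (filter_subset _ _) hodd
      have hin : ∑ j ∈ N with x j = 1, x j = #{j ∈ N | x j = 1} := by
        rw [sum_congr rfl fun j hj => (mem_filter.1 hj).2]; simp
      have hout : ∀ j ∈ N \ {j ∈ N | x j = 1}, x j = 0 := fun j hj =>
        (hx j).resolve_right fun h => by simp [h] at hj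
      rw [fsForm_apply, hin, sum_eq_zero hout] at this
      linarith
    obtain ⟨k, hk⟩ := Nat.not_odd_iff_even.1 hodd
    exact ⟨k, by rw [hsum, hk]; push_cast; ring⟩

theorem code_subset_polytope (N : Finset ι) : code N ⊆ polytope N :=
  fun _ hx => (mem_code_iff_mem_polytope hx.1).1 hx

def IsTight (N S : Finset ι) (x : ι → ℝ) : Prop :=
  S ⊆ N ∧ Odd #S ∧ fsForm N S x = #S - 1

def indicatorDist (S : Finset ι) (x : ι → ℝ) (l : ι) : ℝ :=
  if l ∈ S then 1 - x l else x l

theorem sum_indicatorDist {N S : Finset ι} (hS : S ⊆ N) (x : ι → ℝ) :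
    ∑ l ∈ N, indicatorDist S x l = #S - fsForm N S x := by
  have hin : ∀ l ∈ S, indicatorDist S x l = 1 - x l := fun l hl => if_pos hl
  have hout : ∀ l ∈ N \ S, indicatorDist S x l = x l := fun l hl => if_neg (mem_sdiff.1 hl).2
  rw [← sum_sdiff hS, sum_congr rfl hout, sum_congr rfl hin, sum_sub_distrib]
  simp only [sum_const, nsmul_eq_mul, mul_one, fsForm_apply]
  ring

theorem indicatorDist_nonneg (S : Finset ι) {x : ι → ℝ} {l : ι}
    (hx : 0 ≤ x l ∧ x l ≤ 1) : 0 ≤ indicatorDist S x l := by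
  unfold indicatorDist; split_ifs <;> linarith [hx.1, hx.2]

theorem indicatorDist_mem_Ioo (S : Finset ι) {x : ι → ℝ} {l : ι} (hx : x l ∈ Set.Ioo 0 1) :
    indicatorDist S x l ∈ Set.Ioo 0 1 := by
  obtain ⟨h0, h1⟩ := hx
  unfold indicatorDist; split_ifs <;> constructor <;> linarith

theorem indicatorDist_eq_zero_or_one (S : Finset ι) {x : ι → ℝ} {l : ι}
    (hx : x l = 0 ∨ x l = 1) : indicatorDist S x l = 0 ∨ indicatorDist S x l = 1 := by
  unfold indicatorDist; split_ifs <;> rcases hx with h | h <;> simp [h]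

theorem indicatorDist_add_indicatorDist_of_mem_symmDiff {S₁ S₂ : Finset ι} (x : ι → ℝ)
    {l : ι} (hl : l ∈ S₁ ∆ S₂) : indicatorDist S₁ x l + indicatorDist S₂ x l = 1 := by
  rcases mem_symmDiff.1 hl with ⟨h₁, h₂⟩ | ⟨h₂, h₁⟩ <;> simp [indicatorDist, h₁, h₂]

namespace IsTight

variable {N S S₀ : Finset ι} {x : ι → ℝ} {j : ι}

theorem sum_indicatorDist_eq_one (h : IsTight N S x) : ∑ l ∈ N, indicatorDist S x l = 1 := by
  rw [SingleParityCheck.sum_indicatorDist h.1, h.2.2]; ring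

theorem exists_ne_mem_Ioo (h : IsTight N S x) (hbox : ∀ l, 0 ≤ x l ∧ x l ≤ 1) (hj : j ∈ N)
    (hfrac : x j ∈ Set.Ioo 0 1) : ∃ k ∈ N, k ≠ j ∧ x k ∈ Set.Ioo 0 1 := by
  by_contra! hint
  have hsum := h.sum_indicatorDist_eq_one
  rw [← add_sum_erase N _ hj, sum_eq_card_filter_of_forall_eq_zero_or_one fun k hk =>
    indicatorDist_eq_zero_or_one S (eq_zero_or_eq_one_of_notMem_Ioo (hbox k)
      (hint k (mem_of_mem_erase hk) (ne_of_mem_erase hk)))] at hsum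
  obtain ⟨h0, h1⟩ := indicatorDist_mem_Ioo S hfrac
  have hpos : (0 : ℝ) < #{l ∈ N.erase j | indicatorDist S x l = 1} := by linarith
  have hlt : (#{l ∈ N.erase j | indicatorDist S x l = 1} : ℝ) < 1 := by linarith
  norm_cast at hpos hlt
  omega

theorem eq_or_mem_symmDiff (h : IsTight N S x) (h₀ : IsTight N S₀ x)
    (hbox : ∀ l, 0 ≤ x l ∧ x l ≤ 1) (hj : j ∈ N) (hfrac : x j ∈ Set.Ioo 0 1) :
    S = S₀ ∨ j ∈ S ∆ S₀ := by
  by_contra! hcon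
  obtain ⟨hne, hjΔ⟩ := hcon
  have hΔN : insert j (S ∆ S₀) ⊆ N :=
    insert_subset hj (symmDiff_le_sup.trans (sup_le h.1 h₀.1))
  have hle : ∑ l ∈ insert j (S ∆ S₀), (indicatorDist S x l + indicatorDist S₀ x l) ≤ 2 := by
    calc _ ≤ ∑ l ∈ N, (indicatorDist S x l + indicatorDist S₀ x l) :=
          sum_le_sum_of_subset_of_nonneg hΔN fun l _ _ =>
            add_nonneg (indicatorDist_nonneg S (hbox l)) (indicatorDist_nonneg S₀ (hbox l))
      _ = 2 := by
          rw [sum_add_distrib, h.sum_indicatorDist_eq_one, h₀.sum_indicatorDist_eq_one]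
          norm_num
  rw [sum_insert hjΔ, sum_congr rfl fun l hl =>
    indicatorDist_add_indicatorDist_of_mem_symmDiff x hl, sum_const, nsmul_one] at hle
  have hlt : (#(S ∆ S₀) : ℝ) < 2 := by
    linarith [(indicatorDist_mem_Ioo S hfrac).1, (indicatorDist_mem_Ioo S₀ hfrac).1]
  norm_cast at hlt
  obtain ⟨r, hr⟩ := even_card_symmDiff h.2.1 h₀.2.1
  exact hne (symmDiff_eq_bot.1 (card_eq_zero.1 (by omega)))

end IsTight

theorem eventually_add_smul_mem_polytope [Finite ι] {N : Finset ι} {x d : ι → ℝ}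
    (hx : x ∈ polytope N) (hsupp : ∀ l, d l ≠ 0 → x l ∈ Set.Ioo 0 1)
    (htight : ∀ S, IsTight N S x → fsForm N S d = 0) :
    ∀ᶠ t in 𝓝 (0 : ℝ), x + t • d ∈ polytope N := by
  have hcont : Continuous fun t : ℝ => x + t • d := by fun_prop
  have hbox (l : ι) : ∀ᶠ t in 𝓝 (0 : ℝ), 0 ≤ (x + t • d) l ∧ (x + t • d) l ≤ 1 := by
    by_cases hdl : d l = 0
    · exact Eventually.of_forall fun t => by simpa [hdl] using hx.1 l
    · have hIoo : Set.Ioo 0 1 ∈ 𝓝 ((x + (0 : ℝ) • d) l) := by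
        simpa using isOpen_Ioo.mem_nhds (hsupp l hdl)
      exact ((continuous_apply l).comp hcont).continuousAt.eventually_mem hIoo |>.mono
        fun t ht => ⟨ht.1.le, ht.2.le⟩
  have hfs (S : Finset ι) (hS : S ⊆ N) (hodd : Odd #S) :
      ∀ᶠ t in 𝓝 (0 : ℝ), fsForm N S (x + t • d) ≤ #S - 1 := by
    by_cases ht : fsForm N S x = #S - 1
    · refine Eventually.of_forall fun t => ?_
      rw [map_add, map_smul, htight S ⟨hS, hodd, ht⟩, smul_zero, add_zero, ht]
    · have hlt : fsForm N S (x + (0 : ℝ) • d) < #S - 1 := by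
        simpa using lt_of_le_of_ne (hx.2 S hS hodd) ht
      exact ((continuous_fsForm N S).comp hcont).continuousAt.eventually_lt continuousAt_const
        hlt |>.mono fun t => le_of_lt
  filter_upwards [eventually_all.2 hbox, eventually_all.2 fun S => eventually_imp_distrib_left.2
    fun hS => eventually_imp_distrib_left.2 (hfs S hS)] with t h₁ h₂
  exact ⟨h₁, h₂⟩

def memSign (S : Finset ι) (l : ι) : ℝ := if l ∈ S then 1 else -1

theorem memSign_mul_self (S : Finset ι) (l : ι) : memSign S l * memSign S l = 1 := by
  unfold memSign; split_ifs <;> norm_num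

theorem memSign_mul_memSign_of_mem_symmDiff {S₁ S₂ : Finset ι} {l : ι}
    (hl : l ∈ S₁ ∆ S₂) : memSign S₁ l * memSign S₂ l = -1 := by
  rcases mem_symmDiff.1 hl with ⟨h₁, h₂⟩ | ⟨h₂, h₁⟩ <;> simp [memSign, h₁, h₂]

theorem fsForm_single {N : Finset ι} (S : Finset ι) {l : ι} (hl : l ∈ N) (a : ℝ) :
    fsForm N S (Pi.single l a) = memSign S l * a := by
  by_cases hlS : l ∈ S <;> simp [memSign, Pi.single_apply, hlS, hl]

theorem fsForm_single_of_notMem {N S : Finset ι} (hS : S ⊆ N) {l : ι} (hl : l ∉ N) (a : ℝ) :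
    fsForm N S (Pi.single l a) = 0 := by
  have : l ∉ S := fun h => hl (hS h)
  simp [Pi.single_apply, hl, this]

theorem exists_ne_zero_eventually_add_smul_mem_polytope [Finite ι] {N : Finset ι}
    {x : ι → ℝ} (hx : x ∈ polytope N) {j : ι} (hj : x j ∈ Set.Ioo 0 1) :
    ∃ d ≠ 0, ∀ᶠ t in 𝓝 (0 : ℝ), x + t • d ∈ polytope N := by
  by_cases hcase : j ∈ N ∧ ∃ S₀, IsTight N S₀ x
  · obtain ⟨hjN, S₀, h₀⟩ := hcase
    obtain ⟨k, hkN, hkj, hk⟩ := h₀.exists_ne_mem_Ioo hx.1 hjN hj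
    refine ⟨Pi.single j (memSign S₀ j) - Pi.single k (memSign S₀ k), fun hd => ?_,
      eventually_add_smul_mem_polytope hx (fun l hl => ?_) fun S hS => ?_⟩
    · have := congr_fun hd j
      simp only [Pi.sub_apply, Pi.single_eq_same, Pi.single_eq_of_ne hkj.symm, sub_zero,
        Pi.zero_apply, memSign] at this
      split_ifs at this <;> norm_num at this
    · by_cases hlj : l = j
      · exact hlj ▸ hj
      by_cases hlk : l = k
      · exact hlk ▸ hk
      simp [hlj, hlk] at hl
    · rw [map_sub, fsForm_single S hjN, fsForm_single S hkN]
      obtain rfl | ⟨hjΔ, hkΔ⟩ := or_and_left.2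
        ⟨hS.eq_or_mem_symmDiff h₀ hx.1 hjN hj, hS.eq_or_mem_symmDiff h₀ hx.1 hkN hk⟩
      · rw [memSign_mul_self, memSign_mul_self, sub_self]
      · rw [memSign_mul_memSign_of_mem_symmDiff hjΔ, memSign_mul_memSign_of_mem_symmDiff hkΔ,
          sub_self]
  · refine ⟨Pi.single j (1 : ℝ), by simp, eventually_add_smul_mem_polytope hx (fun l hl => ?_)
      fun S hS => fsForm_single_of_notMem hS.1 (fun hjN => hcase ⟨hjN, S, hS⟩) 1⟩
    by_cases hlj : l = j
    · exact hlj ▸ hj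
    simp [hlj] at hl

theorem extremePoints_polytope_subset_code [Finite ι] (N : Finset ι) :
    (polytope N).extremePoints ℝ ⊆ code N := by
  intro x hx
  have hint (j : ι) : x j = 0 ∨ x j = 1 := by
    refine eq_zero_or_eq_one_of_notMem_Ioo (hx.1.1 j) fun hj => ?_
    obtain ⟨d, hd, hev⟩ := exists_ne_zero_eventually_add_smul_mem_polytope hx.1 hj
    exact notMem_extremePoints_of_eventually_add_smul_mem hd hev hx
  exact (mem_code_iff_mem_polytope hint).2 hx.1

end SingleParityCheck

/-- The convex hull of a single parity-check code (bits indexed by `N` have even sum)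
is exactly the polytope cut out by the box inequalities and the forbidden set
inequalities. -/
theorem spc_convexHull (n : ℕ) (N : Finset (Fin n)) :
    convexHull ℝ {x : Fin n → ℝ |
        (∀ j, x j = 0 ∨ x j = 1) ∧ ∃ k : ℕ, ∑ j ∈ N, x j = 2 * k} =
    {x : Fin n → ℝ | (∀ j, 0 ≤ x j ∧ x j ≤ 1) ∧
      ∀ S ⊆ N, Odd S.card →
        ∑ j ∈ S, x j - ∑ j ∈ N \ S, x j ≤ (S.card : ℝ) - 1} := by
  show convexHull ℝ (SingleParityCheck.code N) = SingleParityCheck.polytope N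
  exact convexHull_eq_of_extremePoints_subset (SingleParityCheck.isCompact_polytope N)
    (SingleParityCheck.convex_polytope N) (SingleParityCheck.finite_code N)
    (SingleParityCheck.code_subset_polytope N)
    (SingleParityCheck.extremePoints_polytope_subset_code N)
end

section
/- If a^T x ≤ α defines a face of conv(C) and y ∈ C is a codeword, then ā^T x ≤ ᾱ also defines a face of conv(C), where ā_j = a_j if j ∉ supp(y), ā_j = −a_j if j ∈ supp(y), and ᾱ = α − a^T y. Moreover, the map x ↦ x ⊕ y (coordinatewise, with coordinate j mapped to 1−x_j if j ∈ supp(y)) maps the first face bijectively onto the second, so both faces have the same dimension. -/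
/-- Symmetry of the codeword polytope: if `aᵀx ≤ α` defines a face of `conv(C)` and
`y ∈ C`, then `āᵀx ≤ ᾱ` (with signs flipped on `supp(y)` and `ᾱ = α - aᵀy`) also
defines a face of `conv(C)`; the coordinate-flipping map `φ_y` maps the first face
bijectively onto the second, and both faces have the same dimension. -/
theorem face_symmetry (n : ℕ) (C : Submodule (ZMod 2) (Fin n → ZMod 2))
    (e : (Fin n → ZMod 2) → (Fin n → ℝ)) (he : e = fun x j => ((x j).val : ℝ))
    (a : Fin n → ℝ) (α : ℝ)
    (hvalid : ∀ x ∈ convexHull ℝ (e '' C), ∑ j, a j * x j ≤ α)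
    (y : Fin n → ZMod 2) (hy : y ∈ C)
    (abar : Fin n → ℝ) (habar : abar = fun j => if y j = 1 then -a j else a j)
    (αbar : ℝ) (hαbar : αbar = α - ∑ j, a j * ((y j).val : ℝ))
    (φ : (Fin n → ℝ) → (Fin n → ℝ))
    (hφ : φ = fun x j => if y j = 1 then 1 - x j else x j) :
    (∀ x ∈ convexHull ℝ (e '' C), ∑ j, abar j * x j ≤ αbar) ∧
    Set.BijOn φ {x ∈ convexHull ℝ (e '' C) | ∑ j, a j * x j = α}
      {x ∈ convexHull ℝ (e '' C) | ∑ j, abar j * x j = αbar} ∧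
    Module.finrank ℝ
        (vectorSpan ℝ {x ∈ convexHull ℝ (e '' C) | ∑ j, a j * x j = α}) =
      Module.finrank ℝ
        (vectorSpan ℝ {x ∈ convexHull ℝ (e '' C) | ∑ j, abar j * x j = αbar}) := by
  -- the linear part of φ
  set L : (Fin n → ℝ) →ₗ[ℝ] (Fin n → ℝ) :=
    LinearMap.pi (fun j => (if y j = 1 then (-1 : ℝ) else 1) • LinearMap.proj j) with hL
  have hLapp : ∀ (x : Fin n → ℝ) (j : Fin n),
      L x j = (if y j = 1 then (-1 : ℝ) else 1) * x j := by
    intro x j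
    by_cases h : y j = 1 <;> simp [hL, LinearMap.pi_apply, h]
  -- φ as an affine map
  set f : (Fin n → ℝ) →ᵃ[ℝ] (Fin n → ℝ) :=
    AffineMap.const ℝ _ (fun j => if y j = 1 then (1 : ℝ) else 0) + L.toAffineMap with hf
  have hfφ : ∀ x, f x = φ x := by
    intro x; funext j
    simp only [hf, hφ, AffineMap.coe_add, AffineMap.coe_const,
      LinearMap.coe_toAffineMap, Pi.add_apply, Function.const_apply, hLapp]
    by_cases h : y j = 1 <;> simp [h] <;> ring
  -- involution
  have hinv : ∀ x, φ (φ x) = x := by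
    intro x; funext j
    by_cases h : y j = 1 <;> simp [hφ, h]
  -- φ commutes with e and the group structure
  have hZ : ∀ z : ZMod 2, z = 0 ∨ z = 1 := by decide
  have hφe : ∀ x : Fin n → ZMod 2, φ (e x) = e (x + y) := by
    intro x; funext j
    simp only [hφ, he, Pi.add_apply]
    rcases hZ (x j) with h | h <;> rcases hZ (y j) with h' | h' <;> rw [h, h'] <;>
      norm_num [show ((0 : ZMod 2)).val = 0 from rfl, show ((1 : ZMod 2)).val = 1 from rfl,
        show ((0 + 0 : ZMod 2)).val = 0 from rfl, show ((0 + 1 : ZMod 2)).val = 1 from rfl,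
        show ((1 + 0 : ZMod 2)).val = 1 from rfl, show ((1 + 1 : ZMod 2)).val = 0 from rfl,
        show ((2 : ZMod 2)).val = 0 from rfl, -ZMod.natCast_val]
  -- φ maps e '' C onto itself
  have himg : φ '' (e '' C) = e '' C := by
    apply Set.Subset.antisymm
    · rintro _ ⟨_, ⟨x, hx, rfl⟩, rfl⟩
      exact ⟨x + y, C.add_mem hx hy, (hφe x).symm⟩
    · rintro _ ⟨x, hx, rfl⟩
      refine ⟨e (x + y), ⟨x + y, C.add_mem hx hy, rfl⟩, ?_⟩
      rw [← hφe x, hinv]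
  -- φ maps the convex hull onto itself
  have hconv : φ '' convexHull ℝ (e '' C) = convexHull ℝ (e '' C) := by
    have := f.image_convexHull (e '' C)
    simp only [funext hfφ] at this
    rw [this, himg]
  have hconvmem : ∀ x ∈ convexHull ℝ (e '' C), φ x ∈ convexHull ℝ (e '' C) := by
    intro x hx
    rw [← hconv]; exact ⟨x, hx, rfl⟩
  -- value of (y j).val
  have hval : ∀ j, ((y j).val : ℝ) = if y j = 1 then 1 else 0 := by
    intro j; rcases hZ (y j) with h | h <;> rw [h] <;>
      norm_num [show ((0 : ZMod 2)).val = 0 from rfl, show ((1 : ZMod 2)).val = 1 from rfl]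
  -- key sum identity
  have hsum : ∀ x : Fin n → ℝ,
      ∑ j, abar j * x j = (∑ j, a j * φ x j) - ∑ j, a j * ((y j).val : ℝ) := by
    intro x
    rw [eq_sub_iff_add_eq, ← Finset.sum_add_distrib]
    refine Finset.sum_congr rfl fun j _ => ?_
    rw [habar, hφ, hval j]
    by_cases h : y j = 1 <;> simp [h] <;> ring
  -- validity
  have hvalid' : ∀ x ∈ convexHull ℝ (e '' C), ∑ j, abar j * x j ≤ αbar := by
    intro x hx
    rw [hsum x, hαbar]
    exact sub_le_sub_right (hvalid _ (hconvmem x hx)) _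
  refine ⟨hvalid', ?_, ?_⟩
  · -- bijectivity
    constructor
    · rintro x ⟨hx, hxα⟩
      refine ⟨hconvmem x hx, ?_⟩
      rw [hsum (φ x), hinv, hxα, hαbar]
    constructor
    · intro x _ z _ hxz
      have := congrArg φ hxz
      rwa [hinv, hinv] at this
    · rintro z ⟨hz, hzα⟩
      refine ⟨φ z, ⟨hconvmem z hz, ?_⟩, hinv z⟩
      have := hsum z
      rw [hzα, hαbar] at this
      linarith
  · -- dimensions
    have hbij : Set.BijOn φ {x ∈ convexHull ℝ (e '' C) | ∑ j, a j * x j = α}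
        {x ∈ convexHull ℝ (e '' C) | ∑ j, abar j * x j = αbar} := by
      constructor
      · rintro x ⟨hx, hxα⟩
        refine ⟨hconvmem x hx, ?_⟩
        rw [hsum (φ x), hinv, hxα, hαbar]
      constructor
      · intro x _ z _ hxz
        have := congrArg φ hxz
        rwa [hinv, hinv] at this
      · rintro z ⟨hz, hzα⟩
        refine ⟨φ z, ⟨hconvmem z hz, ?_⟩, hinv z⟩
        have := hsum z
        rw [hzα, hαbar] at this
        linarith
    have himg2 : {x ∈ convexHull ℝ (e '' C) | ∑ j, abar j * x j = αbar} =
        φ '' {x ∈ convexHull ℝ (e '' C) | ∑ j, a j * x j = α} := hbij.image_eq.symm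
    have hfimg : φ '' {x ∈ convexHull ℝ (e '' C) | ∑ j, a j * x j = α} =
        f '' {x ∈ convexHull ℝ (e '' C) | ∑ j, a j * x j = α} := by
      simp [funext hfφ]
    rw [himg2, hfimg, ← AffineMap.vectorSpan_image_eq_submodule_map]
    have hflin : f.linear = L := by
      simp [hf]
    rw [hflin]
    -- L is a linear equivalence (self-inverse)
    have hLinv : ∀ x, L (L x) = x := by
      intro x; funext j
      rw [hLapp, hLapp]
      by_cases h : y j = 1 <;> simp [h]
    let Leq : (Fin n → ℝ) ≃ₗ[ℝ] (Fin n → ℝ) :=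
      { L with invFun := L, left_inv := hLinv, right_inv := hLinv }
    exact (LinearEquiv.finrank_map_eq Leq _).symm
end

section
/- Let P ⊆ [0,1]^n be the intersection of the box [0,1]^n with all FS inequalities of a parity-check matrix H, and let x* be any point of P. Then no row i of H can have exactly one index j ∈ N_i with x*_j non-integral; i.e., if x*_j ∈ (0,1) for exactly one j ∈ N_i, then x* violates some FS inequality of row i. -/
/-!
Let `j₀` be the only fractional coordinate in `N_i` and `A` the set of coordinates of `N_i` equal
to `1`. If `|A|` is odd, the FS inequality for `S = A` has left side `|A| - x*_{j₀} > |A| - 1`; if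
`|A|` is even, the one for `S = A ∪ {j₀}` has left side `|A| + x*_{j₀} > |A|`.
-/

open Finset

section ForbiddenSets

variable {ι : Type*} {N : Finset ι} {x : ι → ℝ} {j₀ : ι}

lemma exists_eq_zero_or_eq_one_of_card_filter_fractional_eq_one
    (hbox : ∀ j ∈ N, 0 ≤ x j ∧ x j ≤ 1) (hcard : #(N.filter fun j => 0 < x j ∧ x j < 1) = 1) :
    ∃ j₀ ∈ N, (0 < x j₀ ∧ x j₀ < 1) ∧ ∀ j ∈ N, j ≠ j₀ → x j = 0 ∨ x j = 1 := by
  obtain ⟨j₀, hj₀⟩ := card_eq_one.1 hcard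
  have hmem := mem_filter.1 (hj₀ ▸ mem_singleton_self j₀)
  refine ⟨j₀, hmem.1, hmem.2, fun j hj hne => ?_⟩
  by_contra! hfrac
  have hjfrac : j ∈ N.filter fun j => 0 < x j ∧ x j < 1 :=
    mem_filter.2 ⟨hj, (hbox j hj).1.lt_of_ne' hfrac.1, (hbox j hj).2.lt_of_ne hfrac.2⟩
  exact hne (mem_singleton.1 (hj₀ ▸ hjfrac))

lemma sum_filter_eq_one (N : Finset ι) (x : ι → ℝ) :
    ∑ j ∈ N.filter (x · = 1), x j = #(N.filter (x · = 1)) := by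
  rw [sum_congr rfl fun j hj => (mem_filter.1 hj).2]
  simp

variable [DecidableEq ι]

lemma sum_sdiff_filter_eq_one (hj₀ : j₀ ∈ N) (hx₀ : x j₀ ≠ 1)
    (hint : ∀ j ∈ N, j ≠ j₀ → x j = 0 ∨ x j = 1) :
    ∑ j ∈ N \ N.filter (x · = 1), x j = x j₀ := by
  rw [← filter_not]
  refine sum_eq_single_of_mem j₀ (mem_filter.2 ⟨hj₀, hx₀⟩) fun j hj hne => ?_
  obtain ⟨hjN, hj1⟩ := mem_filter.1 hj
  exact (hint j hjN hne).resolve_right hj1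

theorem exists_odd_subset_card_sub_one_lt_sum_sub_sum_sdiff (hj₀ : j₀ ∈ N) (hpos : 0 < x j₀)
    (hlt : x j₀ < 1) (hint : ∀ j ∈ N, j ≠ j₀ → x j = 0 ∨ x j = 1) :
    ∃ S ⊆ N, Odd #S ∧ (#S : ℝ) - 1 < ∑ j ∈ S, x j - ∑ j ∈ N \ S, x j := by
  set A := N.filter (x · = 1)
  have hA : A ⊆ N := filter_subset _ _
  have hj₀A : j₀ ∉ A := fun h => hlt.ne (mem_filter.1 h).2
  have hsumA := sum_filter_eq_one N x
  have hcompl := sum_sdiff_filter_eq_one hj₀ hlt.ne hint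
  rcases Nat.even_or_odd #A with hev | hodd
  · refine ⟨insert j₀ A, insert_subset hj₀ hA, ?_, ?_⟩
    · rw [card_insert_of_notMem hj₀A]
      exact hev.add_one
    · rw [card_insert_of_notMem hj₀A, sum_insert hj₀A, sdiff_insert,
        sum_erase_eq_sub (mem_sdiff.2 ⟨hj₀, hj₀A⟩), hsumA, hcompl]
      push_cast
      linarith
  · exact ⟨A, hA, hodd, by rw [hsumA, hcompl]; linarith⟩

end ForbiddenSets

/-- No point of the box `[0,1]ⁿ` satisfying all forbidden set inequalities of a
parity-check matrix `H` can have exactly one non-integral coordinate in the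
neighborhood `N_i` of any check node `i`. -/
theorem no_check_with_single_fractional_neighbor (m n : ℕ)
    (H : Matrix (Fin m) (Fin n) (ZMod 2)) (x : Fin n → ℝ)
    (hbox : ∀ j, 0 ≤ x j ∧ x j ≤ 1)
    (hFS : ∀ i : Fin m, ∀ S ⊆ Finset.univ.filter (fun j => H i j ≠ 0),
      Odd S.card →
        ∑ j ∈ S, x j - ∑ j ∈ (Finset.univ.filter (fun j => H i j ≠ 0)) \ S, x j ≤
          (S.card : ℝ) - 1)
    (i : Fin m) :
    ((Finset.univ.filter (fun j => H i j ≠ 0)).filter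
        (fun j => 0 < x j ∧ x j < 1)).card ≠ 1 := by
  intro hcard
  obtain ⟨j₀, hj₀, ⟨hpos, hlt⟩, hint⟩ :=
    exists_eq_zero_or_eq_one_of_card_filter_fractional_eq_one (fun j _ => hbox j) hcard
  obtain ⟨S, hSN, hSodd, hviolated⟩ :=
    exists_odd_subset_card_sub_one_lt_sum_sub_sum_sdiff hj₀ hpos hlt hint
  exact (hFS i S hSN hSodd).not_gt hviolated
end

section
/- Given a point x* ∈ [0,1]^n and a row i of H, a violated FS inequality of row i, if one exists, is found by the set S* = {j ∈ N_i : x*_j > 1/2} adjusted for parity: if |S*| is odd, then x* violates some FS inequality of row i if and only if Σ_{j∈S*} x*_j − Σ_{j∈N_i\S*} x*_j > |S*| − 1; i.e., among all odd-cardinality S ⊆ N_i, the set S* maximizes Σ_{j∈S} x*_j − Σ_{j∈N_i\S} x*_j when |S*| is odd. -/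
lemma key_rewrite (n : ℕ) (N S : Finset (Fin n)) (x : Fin n → ℝ) (hS : S ⊆ N) :
    (∑ j ∈ S, x j - ∑ j ∈ N \ S, x j) - ((S.card : ℝ) - 1)
      = (∑ j ∈ N, if j ∈ S then x j - 1 else -x j) + 1 := by
  rw [← Finset.sum_sdiff hS]
  have h1 : ∑ j ∈ N \ S, (if j ∈ S then x j - 1 else -x j) = ∑ j ∈ N \ S, (-x j) :=
    Finset.sum_congr rfl (fun j hj => by simp [(Finset.mem_sdiff.mp hj).2])
  have h2 : ∑ j ∈ S, (if j ∈ S then x j - 1 else -x j) = ∑ j ∈ S, (x j - 1) :=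
    Finset.sum_congr rfl (fun j hj => by simp [hj])
  rw [h1, h2, Finset.sum_sub_distrib, Finset.sum_neg_distrib, Finset.sum_const]
  push_cast
  ring

/-- Greedy separation: for `x* ∈ [0,1]ⁿ` and `S* = {j ∈ N : x*_j > 1/2}` of odd
cardinality, some forbidden set inequality of the row is violated iff the one at
`S*` is violated; indeed among all odd-cardinality `S ⊆ N` the set `S*` maximizes
the violation `(∑_{j∈S} x*_j − ∑_{j∈N\S} x*_j) − (|S| − 1)`. -/
theorem greedy_separation (n : ℕ) (N : Finset (Fin n)) (x : Fin n → ℝ)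
    (hbox : ∀ j, 0 ≤ x j ∧ x j ≤ 1)
    (Sstar : Finset (Fin n)) (hSstar : Sstar = N.filter (fun j => 1/2 < x j))
    (hodd : Odd Sstar.card) :
    ((∃ S ⊆ N, Odd S.card ∧
        (S.card : ℝ) - 1 < ∑ j ∈ S, x j - ∑ j ∈ N \ S, x j) ↔
      (Sstar.card : ℝ) - 1 < ∑ j ∈ Sstar, x j - ∑ j ∈ N \ Sstar, x j) ∧
    (∀ S ⊆ N, Odd S.card →
      (∑ j ∈ S, x j - ∑ j ∈ N \ S, x j) - ((S.card : ℝ) - 1) ≤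
        (∑ j ∈ Sstar, x j - ∑ j ∈ N \ Sstar, x j) - ((Sstar.card : ℝ) - 1)) := by
  have hsub : Sstar ⊆ N := hSstar ▸ Finset.filter_subset _ _
  have hmax : ∀ S ⊆ N, Odd S.card →
      (∑ j ∈ S, x j - ∑ j ∈ N \ S, x j) - ((S.card : ℝ) - 1) ≤
        (∑ j ∈ Sstar, x j - ∑ j ∈ N \ Sstar, x j) - ((Sstar.card : ℝ) - 1) := by
    intro S hSN _
    rw [key_rewrite n N S x hSN, key_rewrite n N Sstar x hsub]
    have : (∑ j ∈ N, if j ∈ S then x j - 1 else -x j)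
        ≤ ∑ j ∈ N, if j ∈ Sstar then x j - 1 else -x j := by
      apply Finset.sum_le_sum
      intro j hj
      have hmem : j ∈ Sstar ↔ 1/2 < x j := by
        rw [hSstar, Finset.mem_filter]; exact ⟨fun h => h.2, fun h => ⟨hj, h⟩⟩
      by_cases hs : j ∈ Sstar
      · have := hmem.mp hs
        by_cases h2 : j ∈ S <;> simp [hs, h2] <;> linarith
      · have : ¬ (1/2 < x j) := fun h => hs (hmem.mpr h)
        by_cases h2 : j ∈ S <;> simp [hs, h2] <;> linarith
    linarith
  refine ⟨⟨?_, fun h => ⟨Sstar, hsub, hodd, h⟩⟩, hmax⟩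
  rintro ⟨S, hSN, hSodd, hviol⟩
  have := hmax S hSN hSodd
  linarith
end
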